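/- Let G be a group, φ : G → G a group endomorphism and F a nonempty finite subset of G. Then the limit H_alg(φ,F) = lim_{n→∞} (log |T_n(φ,F)|)/n exists (and equals inf_{n≥1} (log |T_n(φ,F)|)/n); moreover H_alg(φ,F) ≤ log |F|. -/

import Mathlib

open scoped Pointwise ENNReal

/-- The `n`-th trajectory of a finite subset `F` under `φ`
(`Tn φ F n = T_{n+1}(φ,F) = F·φ(F)·…·φⁿ(F)`, a pointwise product of finsets). -/
noncomputable def Tn {G : Type*} [Group G] (φ : G → G) (F : Finset G) : ℕ → Finset G
  | 0 => F
  | n + 1 =>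
      letI := Classical.decEq G
      Tn φ F n * F.image φ^[n + 1]

section Aux

variable {G : Type*} [Group G] (φ : G → G)
  (hφ : ∀ x y : G, φ (x * y) = φ x * φ y) (F : Finset G)

include hφ in
lemma iterate_mul_hom (k : ℕ) (x y : G) : φ^[k] (x * y) = φ^[k] x * φ^[k] y := by
  induction k generalizing x y with
  | zero => simp
  | succ k ih => simp [Function.iterate_succ_apply, hφ, ih]

lemma Tn_nonempty (hF : F.Nonempty) (n : ℕ) : (Tn φ F n).Nonempty := by
  induction n with
  | zero => exact hF
  | succ n ih =>
      classical
      rw [Tn]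
      exact ih.mul (hF.image _)

include hφ in
lemma Tn_add (m n : ℕ) :
    Tn φ F (m + n + 1) =
      letI := Classical.decEq G
      Tn φ F m * (Tn φ F n).image φ^[m + 1] := by
  classical
  induction n with
  | zero => rw [Tn]; rfl
  | succ n ih =>
      have hmn : m + (n + 1) + 1 = (m + n + 1) + 1 := by ring
      rw [hmn, Tn, ih]
      have hmh : ∀ x y : G, φ^[m + 1] (x * y) = φ^[m + 1] x * φ^[m + 1] y :=
        iterate_mul_hom φ hφ (m + 1)
      let f : G →ₙ* G := ⟨φ^[m + 1], hmh⟩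
      have himg : ((Tn φ F n * F.image φ^[n + 1]).image φ^[m + 1] : Finset G) =
          (Tn φ F n).image φ^[m + 1] * (F.image φ^[n + 1]).image φ^[m + 1] :=
        Finset.image_mul (f := f)
      rw [Tn, himg, Finset.image_image]
      have hcomp : (φ^[m + 1] ∘ φ^[n + 1]) = φ^[m + n + 2] := by
        rw [← Function.iterate_add]
        ring_nf
      rw [hcomp, mul_assoc]

include hφ in
lemma Tn_card_le (m n : ℕ) :
    (Tn φ F (m + n + 1)).card ≤ (Tn φ F m).card * (Tn φ F n).card := by
  classical
  rw [Tn_add φ hφ F m n]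
  exact le_trans Finset.card_mul_le
    (Nat.mul_le_mul_left _ (Finset.card_image_le))

end Aux

/-- For a group `G`, a group endomorphism `φ : G → G` and a nonempty
finite subset `F ⊆ G`, the limit `H_alg(φ,F) = lim_n (log |T_n(φ,F)|)/n` exists, equals
`inf_{n ≥ 1} (log |T_n(φ,F)|)/n`, and satisfies `H_alg(φ,F) ≤ log |F|`. -/
theorem statement_11 {G : Type*} [Group G] (φ : G → G)
    (hφ : ∀ x y : G, φ (x * y) = φ x * φ y)
    (F : Finset G) (hF : F.Nonempty) :
    Filter.Tendsto (fun n : ℕ => Real.log (Tn φ F n).card / ((n : ℝ) + 1)) Filter.atTop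
      (nhds (⨅ n : ℕ, Real.log (Tn φ F n).card / ((n : ℝ) + 1)))
    ∧ (⨅ n : ℕ, Real.log (Tn φ F n).card / ((n : ℝ) + 1)) ≤ Real.log F.card := by
  classical
  set f : ℕ → ℝ := fun n => Real.log (Tn φ F n).card / ((n : ℝ) + 1) with hf
  set u : ℕ → ℝ := fun n => Real.log (Tn φ F (n - 1)).card with hu
  have hcard : ∀ n, 1 ≤ (Tn φ F n).card := fun n =>
    Finset.card_pos.2 (Tn_nonempty φ F hF n)
  have hlog_nonneg : ∀ n, 0 ≤ Real.log (Tn φ F n).card := fun n =>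
    Real.log_nonneg (by exact_mod_cast hcard n)
  have hsub : Subadditive u := by
    intro m n
    match m, n with
    | 0, n => rw [Nat.zero_add]; exact le_add_of_nonneg_left (hlog_nonneg 0)
    | m, 0 => rw [Nat.add_zero]; exact le_add_of_nonneg_right (hlog_nonneg 0)
    | m + 1, n + 1 =>
        have h1 : (m + 1) + (n + 1) - 1 = m + n + 1 := by omega
        simp only [hu, h1, Nat.add_sub_cancel]
        have h2 := Tn_card_le φ hφ F m n
        have h3 : (0 : ℝ) < ((Tn φ F m).card : ℝ) * ((Tn φ F n).card : ℝ) := by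
          have := hcard m; have := hcard n; positivity
        calc Real.log (Tn φ F (m + n + 1)).card
            ≤ Real.log (((Tn φ F m).card : ℝ) * ((Tn φ F n).card : ℝ)) := by
              apply Real.log_le_log (by exact_mod_cast hcard (m + n + 1))
              exact_mod_cast h2
          _ = Real.log (Tn φ F m).card + Real.log (Tn φ F n).card := by
              rw [Real.log_mul (Nat.cast_pos.2 (hcard m)).ne' (Nat.cast_pos.2 (hcard n)).ne']
  have hbdd : BddBelow (Set.range fun n : ℕ => u n / n) := by
    refine ⟨0, ?_⟩
    rintro x ⟨n, rfl⟩
    exact div_nonneg (hlog_nonneg _) (Nat.cast_nonneg n)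
  have htend := hsub.tendsto_lim hbdd
  -- identify hsub.lim with the infimum of f
  have hset : ((fun n : ℕ => u n / n) '' Set.Ici 1) = Set.range f := by
    ext x
    constructor
    · rintro ⟨n, hn, rfl⟩
      obtain ⟨k, rfl⟩ := Nat.exists_eq_add_of_le hn
      refine ⟨k, ?_⟩
      simp [hf, hu, add_comm 1 k]
    · rintro ⟨k, rfl⟩
      refine ⟨k + 1, Set.mem_Ici.mpr (Nat.le_add_left 1 k), ?_⟩
      simp [hf, hu]
  have hlim : hsub.lim = ⨅ n : ℕ, f n := by
    rw [Subadditive.lim, hset, iInf]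
  have hlim' : hsub.lim = ⨅ n : ℕ, f n := hlim
  constructor
  · -- the shifted sequence tends to the same limit
    have hshift : Filter.Tendsto (fun n : ℕ => u (n + 1) / ((n : ℝ) + 1)) Filter.atTop
        (nhds hsub.lim) := by
      have := htend.comp (Filter.tendsto_add_atTop_nat 1)
      refine this.congr fun n => ?_
      simp [Function.comp]
    rw [← hlim]
    refine hshift.congr fun n => ?_
    simp [hf, hu]
  · rw [← hlim]
    have h0 : hsub.lim ≤ u 1 / (1 : ℕ) := hsub.lim_le_div hbdd one_ne_zero
    simpa [hu, Tn] using h0
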